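/- arXiv:1311.3492 — 6 statements merged into one kernel-verified Lean document; each statement's English description precedes it below -/
import Mathlib

section
/- Call a matrix 'permutation unit LT' if it is permutation similar (A = P L Pᵀ for a permutation matrix P) to a lower triangular matrix with 1's on the diagonal. If A and B are permutation unit LT matrices with A Aᵀ = B Bᵀ, then A = B. -/
/-!
If `A` is unit lower triangular for some ordering of the indices, the row of the first index
`i` in that ordering is the unit vector `eᵢ`, so column `i` of `A * Aᵀ` is column `i` of `A`
and `(A * Aᵀ) i i = 1`. For `B` with `B * Bᵀ = A * Aᵀ`, the identity `∑ₖ B i k ^ 2 = 1` with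
`B i i = 1` forces row `i` of `B` to be `eᵢ` as well; hence `A` and `B` share column `i`, and
deleting row and column `i` leaves matrices of the same kind with equal Gram matrices.
-/

open Matrix

/-- `A` is permutation similar (via the permutation matrix of some `σ`) to a lower triangular
matrix with `1`'s on the diagonal. -/
def PermUnitLT {n : ℕ} (A : Matrix (Fin n) (Fin n) ℝ) : Prop :=
  ∃ σ : Equiv.Perm (Fin n),
    (∀ i : Fin n, A (σ i) (σ i) = 1) ∧ ∀ i j : Fin n, i < j → A (σ i) (σ j) = 0

namespace Matrix

variable {ι R α : Type*} [DecidableEq ι]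

/- With `r` injective, `A.BlockTriangular (OrderDual.toDual ∘ r)` says that `A` is lower
triangular once the indices are listed in increasing order of `r`. -/
theorem row_eq_single_of_blockTriangular [Zero R] [One R] [LinearOrder α] {A : Matrix ι ι R}
    {r : ι → α} (hr : Function.Injective r) (hA : A.BlockTriangular (OrderDual.toDual ∘ r))
    {i : ι} (hd : A i i = 1) (hmin : ∀ j, r i ≤ r j) : A i = Pi.single i 1 := by
  funext k
  rcases eq_or_ne k i with rfl | hk
  · simp [hd]
  · have hik : r i < r k := (hmin k).lt_of_ne (hr.ne hk).symm
    simpa [hk] using hA hik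

variable [Fintype ι] [CommRing R]

theorem mul_transpose_apply_of_row_eq_single {A : Matrix ι ι R} {i : ι}
    (hrow : A i = Pi.single i 1) (j : ι) : (A * Aᵀ) j i = A j i := by
  simp [mul_apply, hrow, Pi.single_apply]

theorem toSquareBlockProp_ne_mul_transpose_eq {A B : Matrix ι ι R} {i : ι}
    (hcol : ∀ j, A j i = B j i) (h : A * Aᵀ = B * Bᵀ) :
    A.toSquareBlockProp (· ≠ i) * (A.toSquareBlockProp (· ≠ i))ᵀ =
      B.toSquareBlockProp (· ≠ i) * (B.toSquareBlockProp (· ≠ i))ᵀ := by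
  ext j k
  have hjk := congr_fun₂ h j k
  simp only [mul_apply, transpose_apply, Fintype.sum_eq_add_sum_subtype_ne _ i, hcol] at hjk
  simpa [mul_apply, toSquareBlockProp_def] using hjk

theorem row_eq_single_of_mul_transpose_apply_self [LinearOrder R] [IsStrictOrderedRing R]
    {A : Matrix ι ι R} {i : ι} (hd : A i i = 1) (h : (A * Aᵀ) i i = 1) :
    A i = Pi.single i 1 := by
  rw [mul_apply, Fintype.sum_eq_add_sum_subtype_ne _ i] at h
  simp only [transpose_apply, hd, mul_one, add_eq_left] at h
  have hsq := (Finset.sum_eq_zero_iff_of_nonneg fun k _ => mul_self_nonneg (A i k.1)).1 h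
  funext k
  rcases eq_or_ne k i with rfl | hk
  · simp [hd]
  · simpa [hk] using hsq ⟨k, hk⟩ (Finset.mem_univ _)

theorem eq_of_mul_transpose_eq_of_blockTriangular [LinearOrder R] [IsStrictOrderedRing R]
    [LinearOrder α] {A B : Matrix ι ι R} {r s : ι → α}
    (hr : Function.Injective r) (hs : Function.Injective s)
    (hA : A.BlockTriangular (OrderDual.toDual ∘ r))
    (hB : B.BlockTriangular (OrderDual.toDual ∘ s))
    (hAd : ∀ i, A i i = 1) (hBd : ∀ i, B i i = 1) (h : A * Aᵀ = B * Bᵀ) : A = B := by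
  induction hn : Fintype.card ι generalizing ι with
  | zero =>
    have := Fintype.card_eq_zero_iff.1 hn
    exact Subsingleton.elim A B
  | succ n ih =>
    have : Nonempty ι := Fintype.card_pos_iff.1 (hn ▸ n.succ_pos)
    obtain ⟨i, hmin⟩ := Finite.exists_min r
    have hArow := row_eq_single_of_blockTriangular hr hA (hAd i) hmin
    have hBrow : B i = Pi.single i 1 := by
      refine row_eq_single_of_mul_transpose_apply_self (hBd i) ?_
      rw [← h, mul_transpose_apply_of_row_eq_single hArow, hAd]
    have hcol (j : ι) : A j i = B j i := by
      rw [← mul_transpose_apply_of_row_eq_single hArow, h,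
        mul_transpose_apply_of_row_eq_single hBrow]
    have hsub : A.toSquareBlockProp (· ≠ i) = B.toSquareBlockProp (· ≠ i) := by
      refine ih (hr.comp Subtype.val_injective) (hs.comp Subtype.val_injective)
        hA.submatrix hB.submatrix (fun j => hAd j) (fun j => hBd j)
        (toSquareBlockProp_ne_mul_transpose_eq hcol h) ?_
      simp [Fintype.card_subtype_compl, hn]
    ext j k
    rcases eq_or_ne k i with rfl | hk
    · exact hcol j
    rcases eq_or_ne j i with rfl | hj
    · rw [hArow, hBrow]
    · exact congr_fun₂ hsub ⟨j, hj⟩ ⟨k, hk⟩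

end Matrix

theorem PermUnitLT.exists_blockTriangular {n : ℕ} {A : Matrix (Fin n) (Fin n) ℝ}
    (hA : PermUnitLT A) :
    ∃ r : Fin n → Fin n, Function.Injective r ∧ A.BlockTriangular (OrderDual.toDual ∘ r) ∧
      ∀ i, A i i = 1 := by
  obtain ⟨σ, hd, h0⟩ := hA
  refine ⟨σ.symm, σ.symm.injective, fun i j hij => ?_, fun i => ?_⟩
  · simpa using h0 (σ.symm i) (σ.symm j) hij
  · simpa using hd (σ.symm i)

/-- If `A` and `B` are permutation unit lower triangular matrices with `A * Aᵀ = B * Bᵀ`,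
then `A = B`. -/
theorem stmt_2 (n : ℕ) (A B : Matrix (Fin n) (Fin n) ℝ)
    (hA : PermUnitLT A) (hB : PermUnitLT B) (h : A * Aᵀ = B * Bᵀ) : A = B := by
  obtain ⟨r, hr, hAr, hAd⟩ := hA.exists_blockTriangular
  obtain ⟨s, hs, hBs, hBd⟩ := hB.exists_blockTriangular
  exact eq_of_mul_transpose_eq_of_blockTriangular hr hs hAr hBs hAd hBd h
end

section
/- If A and B are n×n permutation unit LT matrices, then tr(A Aᵀ Bᵀ B) ≥ n, with equality if and only if B = A⁻¹. -/
open Matrix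

/-!
With `G = (B * A)ᵀ * (B * A)` the trace is `tr G` by cyclicity, and `G` is positive semidefinite
with `det G = 1`. Since `x ≤ exp (x - 1)`, with equality only at `x = 1`, eigenvalues with product
`1` sum to at least `n`, with equality only when all of them are `1`, i.e. `G = 1`. In that case
`Bᵀ * B = A⁻¹ᵀ * A⁻¹`, and `A⁻¹` is again permutation unit lower triangular. A unit-diagonal matrix
with the same Gram matrix as a unit lower triangular `C` is `C` itself: the last column of `C` is a
standard basis vector, which forces the same column of the other matrix and then its last row;
removing the last index, induct.
-/

open Finset

namespace Real

variable {ι : Type*} [Fintype ι]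

theorem prod_le_exp_sum_sub_card {x : ι → ℝ} (hx : ∀ i, 0 ≤ x i) :
    ∏ i, x i ≤ exp (∑ i, x i - Fintype.card ι) := by
  rw [← card_univ, ← nsmul_one, ← sum_const, ← sum_sub_distrib, exp_sum]
  exact prod_le_prod (fun i _ ↦ hx i) fun i _ ↦ by linarith [add_one_le_exp (x i - 1)]

theorem prod_lt_exp_sum_sub_card {x : ι → ℝ} (hx : ∀ i, 0 < x i) (hne : ∃ i, x i ≠ 1) :
    ∏ i, x i < exp (∑ i, x i - Fintype.card ι) := by
  obtain ⟨j, hj⟩ := hne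
  rw [← card_univ, ← nsmul_one, ← sum_const, ← sum_sub_distrib, exp_sum]
  refine prod_lt_prod (fun i _ ↦ hx i) (fun i _ ↦ by linarith [add_one_le_exp (x i - 1)])
    ⟨j, mem_univ j, ?_⟩
  linarith [add_one_lt_exp (x := x j - 1) (sub_ne_zero.mpr hj)]

theorem card_le_sum_of_prod_eq_one {x : ι → ℝ} (hx : ∀ i, 0 ≤ x i) (h : ∏ i, x i = 1) :
    (Fintype.card ι : ℝ) ≤ ∑ i, x i := by
  have := h ▸ prod_le_exp_sum_sub_card hx
  linarith [one_le_exp_iff.mp this]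

theorem eq_one_of_prod_eq_one_of_sum_eq_card {x : ι → ℝ} (hx : ∀ i, 0 ≤ x i)
    (h : ∏ i, x i = 1) (hsum : ∑ i, x i = Fintype.card ι) (i : ι) : x i = 1 := by
  have hpos : ∀ i, 0 < x i := fun i ↦
    (hx i).lt_of_ne' fun h0 ↦ by simp [prod_eq_zero (mem_univ i) h0] at h
  by_contra hi
  simpa [h, hsum] using prod_lt_exp_sum_sub_card hpos ⟨i, hi⟩

end Real

namespace Matrix

section PosSemidef

variable {ι : Type*} [Fintype ι] [DecidableEq ι]

theorem PosSemidef.prod_eigenvalues_eq_one {G : Matrix ι ι ℝ} (hG : G.PosSemidef)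
    (hdet : G.det = 1) : ∏ i, hG.isHermitian.eigenvalues i = 1 := by
  simpa [hdet] using hG.isHermitian.det_eq_prod_eigenvalues.symm

theorem PosSemidef.card_le_trace_of_det_eq_one {G : Matrix ι ι ℝ} (hG : G.PosSemidef)
    (hdet : G.det = 1) : (Fintype.card ι : ℝ) ≤ G.trace := by
  simpa [hG.isHermitian.trace_eq_sum_eigenvalues] using
    Real.card_le_sum_of_prod_eq_one hG.eigenvalues_nonneg (hG.prod_eigenvalues_eq_one hdet)

theorem PosSemidef.eq_one_of_det_eq_one_of_trace_eq_card {G : Matrix ι ι ℝ} (hG : G.PosSemidef)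
    (hdet : G.det = 1) (htr : G.trace = Fintype.card ι) : G = 1 := by
  have hsum : ∑ i, hG.isHermitian.eigenvalues i = Fintype.card ι := by
    simpa [hG.isHermitian.trace_eq_sum_eigenvalues] using htr
  have heig : hG.isHermitian.eigenvalues = 1 := funext <|
    Real.eq_one_of_prod_eq_one_of_sum_eq_card hG.eigenvalues_nonneg
      (hG.prod_eigenvalues_eq_one hdet) hsum
  rw [hG.isHermitian.spectral_theorem]
  simp [heig, Pi.one_def]

end PosSemidef

section IsLowerTriangular

variable {m R : Type*} [LinearOrder m]

theorem IsLowerTriangular.mul_apply_self [Fintype m] [NonUnitalNonAssocSemiring R]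
    {M N : Matrix m m R} (hM : M.IsLowerTriangular) (hN : N.IsLowerTriangular) (i : m) :
    (M * N) i i = M i i * N i i := by
  rw [mul_apply, sum_eq_single i]
  · intro k _ hk
    rcases hk.lt_or_gt with hki | hik
    · rw [hN hki, mul_zero]
    · rw [hM hik, zero_mul]
  · simp

section CommRing

variable [Fintype m] [DecidableEq m] [CommRing R]

theorem IsLowerTriangular.det_eq_one {L : Matrix m m R} (hL : L.IsLowerTriangular)
    (hd : ∀ i, L i i = 1) : L.det = 1 := by
  simp [det_of_isLowerTriangular L hL, hd]

theorem IsLowerTriangular.inv_of_diag_eq_one {L : Matrix m m R} (hL : L.IsLowerTriangular)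
    (hd : ∀ i, L i i = 1) : L⁻¹.IsLowerTriangular ∧ ∀ i, L⁻¹ i i = 1 := by
  have : Invertible L := invertibleOfIsUnitDet L (by simp [hL.det_eq_one hd])
  have hinv : L⁻¹.IsLowerTriangular := blockTriangular_inv_of_blockTriangular hL
  refine ⟨hinv, fun i ↦ ?_⟩
  simpa [hd, inv_mul_of_invertible] using (hinv.mul_apply_self hL i).symm

end CommRing

variable [Ring R] [LinearOrder R] [IsStrictOrderedRing R]

theorem IsLowerTriangular.apply_eq_of_sum_mul_eq {B C : Matrix m m R}
    (hC : C.IsLowerTriangular) (hCd : ∀ i, C i i = 1) (hBd : ∀ i, B i i = 1) (s : Finset m)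
    (h : ∀ i ∈ s, ∀ j ∈ s, ∑ k ∈ s, B k i * B k j = ∑ k ∈ s, C k i * C k j) :
    ∀ i ∈ s, ∀ j ∈ s, B i j = C i j := by
  induction s using Finset.induction_on_max with
  | empty => simp
  | insert r s hlt ih =>
    have hr : r ∉ s := fun hr ↦ lt_irrefl r (hlt r hr)
    have hCcol : ∀ k ∈ s, C k r = 0 := fun k hk ↦ hC (hlt k hk)
    have hCsum : ∀ j, ∑ k ∈ s, C k r * C k j = 0 :=
      fun j ↦ sum_eq_zero fun k hk ↦ by rw [hCcol k hk, zero_mul]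
    have hBcol : ∀ k ∈ s, B k r = 0 := by
      have hrr := h r (mem_insert_self r s) r (mem_insert_self r s)
      rw [sum_insert hr, sum_insert hr, hBd, hCd, hCsum] at hrr
      have hsq : ∑ k ∈ s, B k r * B k r = 0 := by simpa using hrr
      intro k hk
      exact mul_self_eq_zero.mp <|
        (sum_eq_zero_iff_of_nonneg fun k _ ↦ mul_self_nonneg (B k r)).mp hsq k hk
    have hrow : ∀ j ∈ insert r s, B r j = C r j := by
      intro j hj
      have hrj := h r (mem_insert_self r s) j hj
      have hBsum : ∑ k ∈ s, B k r * B k j = 0 :=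
        sum_eq_zero fun k hk ↦ by rw [hBcol k hk, zero_mul]
      rwa [sum_insert hr, sum_insert hr, hBd, hCd, hBsum, hCsum, one_mul, one_mul, add_zero,
        add_zero] at hrj
    have hs : ∀ i ∈ s, ∀ j ∈ s, B i j = C i j := ih fun i hi j hj ↦ by
      have hij := h i (mem_insert_of_mem hi) j (mem_insert_of_mem hj)
      rwa [sum_insert hr, sum_insert hr, hrow i (mem_insert_of_mem hi),
        hrow j (mem_insert_of_mem hj), add_right_inj] at hij
    intro i hi j hj
    rcases mem_insert.mp hi with rfl | his
    · exact hrow j hj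
    rcases mem_insert.mp hj with rfl | hjs
    · rw [hBcol i his, hCcol i his]
    · exact hs i his j hjs

theorem IsLowerTriangular.eq_of_transpose_mul_self_eq [Fintype m] {B C : Matrix m m R}
    (hC : C.IsLowerTriangular) (hCd : ∀ i, C i i = 1) (hBd : ∀ i, B i i = 1)
    (h : Bᵀ * B = Cᵀ * C) : B = C := by
  ext i j
  refine hC.apply_eq_of_sum_mul_eq hCd hBd univ (fun i _ j _ ↦ ?_) i (mem_univ i) j (mem_univ j)
  simpa [mul_apply] using congrFun₂ h i j

end IsLowerTriangular

end Matrix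

namespace PermUnitLT

variable {n : ℕ} {A B : Matrix (Fin n) (Fin n) ℝ}

theorem exists_isLowerTriangular (hA : PermUnitLT A) :
    ∃ σ : Equiv.Perm (Fin n),
      (A.submatrix σ σ).IsLowerTriangular ∧ ∀ i, A.submatrix σ σ i i = 1 :=
  let ⟨σ, hd, hl⟩ := hA
  ⟨σ, fun i j hij ↦ hl i j hij, hd⟩

theorem diag_eq_one (hA : PermUnitLT A) (i : Fin n) : A i i = 1 := by
  obtain ⟨σ, hd, -⟩ := hA
  simpa using hd (σ.symm i)

theorem det_eq_one (hA : PermUnitLT A) : A.det = 1 := by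
  obtain ⟨σ, hL, hd⟩ := hA.exists_isLowerTriangular
  rw [← det_submatrix_equiv_self σ A, hL.det_eq_one hd]

theorem inv (hA : PermUnitLT A) : PermUnitLT A⁻¹ := by
  obtain ⟨σ, hL, hd⟩ := hA.exists_isLowerTriangular
  obtain ⟨hL', hd'⟩ := hL.inv_of_diag_eq_one hd
  rw [inv_submatrix_equiv] at hL' hd'
  exact ⟨σ, hd', fun i j hij ↦ hL' hij⟩

theorem eq_of_transpose_mul_self_eq (hA : PermUnitLT A) (hB : ∀ i, B i i = 1)
    (h : Bᵀ * B = Aᵀ * A) : B = A := by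
  obtain ⟨σ, hL, hd⟩ := hA.exists_isLowerTriangular
  have hσ : B.submatrix σ σ = A.submatrix σ σ := by
    refine hL.eq_of_transpose_mul_self_eq hd (fun i ↦ hB (σ i)) ?_
    simp only [transpose_submatrix, submatrix_mul_equiv, h]
  ext i j
  simpa using congrFun₂ hσ (σ.symm i) (σ.symm j)

end PermUnitLT

/-- If `A` and `B` are `n × n` permutation unit lower triangular matrices, then
`tr (A * Aᵀ * Bᵀ * B) ≥ n`, with equality if and only if `B = A⁻¹`. -/
theorem stmt_3 (n : ℕ) (A B : Matrix (Fin n) (Fin n) ℝ)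
    (hA : PermUnitLT A) (hB : PermUnitLT B) :
    (n : ℝ) ≤ (A * Aᵀ * Bᵀ * B).trace ∧
      ((A * Aᵀ * Bᵀ * B).trace = (n : ℝ) ↔ B = A⁻¹) := by
  have hAu : IsUnit A.det := by simp [hA.det_eq_one]
  have htr : (A * Aᵀ * Bᵀ * B).trace = ((B * A)ᵀ * (B * A)).trace := by
    simpa only [transpose_mul, mul_assoc] using trace_mul_comm A (Aᵀ * Bᵀ * B)
  have hG : ((B * A)ᵀ * (B * A)).PosSemidef := by
    simpa using posSemidef_conjTranspose_mul_self (B * A)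
  have hdet : ((B * A)ᵀ * (B * A)).det = 1 := by simp [hA.det_eq_one, hB.det_eq_one]
  rw [htr]
  refine ⟨by simpa using hG.card_le_trace_of_det_eq_one hdet, fun heq ↦ ?_, ?_⟩
  · have hQ := hG.eq_one_of_det_eq_one_of_trace_eq_card hdet (by simpa using heq)
    refine hA.inv.eq_of_transpose_mul_self_eq hB.diag_eq_one ?_
    calc Bᵀ * B = (B * A * A⁻¹)ᵀ * (B * A * A⁻¹) := by rw [mul_nonsing_inv_cancel_right _ _ hAu]
      _ = A⁻¹ᵀ * ((B * A)ᵀ * (B * A)) * A⁻¹ := by simp only [transpose_mul, mul_assoc]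
      _ = A⁻¹ᵀ * A⁻¹ := by rw [hQ, mul_one]
  · rintro rfl
    simp [nonsing_inv_mul A hAu]
end

section
/- Let B be a strictly upper triangular p×p matrix, Ω = diag(σ₁²,…,σ_p²) with σⱼ > 0, and Θ = (I−B) Ω⁻¹ (I−B)ᵀ. If j < k, B_{jk} = 0, and for every ℓ > k at least one of B_{jℓ}, B_{kℓ} is zero (i.e., j and k are not adjacent and share no common child in the DAG defined by the support of B), then Θ_{jk} = 0. -/
open Matrix

theorem Matrix.mul_diagonal_mul_transpose_apply_eq_zero {m n R : Type*} [Fintype n]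
    [DecidableEq n] [CommSemiring R] (A : Matrix m n R) (e : n → R) {i i' : m}
    (hdisj : ∀ l, A i l = 0 ∨ A i' l = 0) : (A * diagonal e * Aᵀ) i i' = 0 := by
  rw [mul_apply]
  refine Finset.sum_eq_zero fun l _ => ?_
  rw [mul_diagonal, transpose_apply]
  rcases hdisj l with h | h <;> simp [h]

theorem Matrix.one_sub_apply_eq_zero_or_of_no_common_child {n R : Type*} [DecidableEq n]
    [LinearOrder n] [Ring R] {B : Matrix n n R} (hB : ∀ j k, ¬ j < k → B j k = 0)
    {j k : n} (hjk : j < k) (hedge : B j k = 0)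
    (hchild : ∀ l, k < l → B j l = 0 ∨ B k l = 0) (l : n) :
    (1 - B) j l = 0 ∨ (1 - B) k l = 0 := by
  rcases lt_trichotomy l k with hl | rfl | hl
  · exact .inr <| by rw [sub_apply, one_apply_ne hl.ne', hB k l (not_lt_of_gt hl), sub_zero]
  · exact .inl <| by rw [sub_apply, one_apply_ne hjk.ne, hedge, sub_zero]
  · rw [sub_apply, sub_apply, one_apply_ne (hjk.trans hl).ne, one_apply_ne hl.ne]
    simpa using hchild l hl

theorem stmt_6_general (p : ℕ) (B : Matrix (Fin p) (Fin p) ℝ) (d : Fin p → ℝ)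
    (hB : ∀ j k : Fin p, ¬ j < k → B j k = 0)
    (j k : Fin p) (hjk : j < k) (hedge : B j k = 0)
    (hchild : ∀ l : Fin p, k < l → B j l = 0 ∨ B k l = 0) :
    (((1 - B) * (Matrix.diagonal d)⁻¹ * (1 - B)ᵀ : Matrix (Fin p) (Fin p) ℝ)) j k = 0 := by
  rw [inv_diagonal]
  exact mul_diagonal_mul_transpose_apply_eq_zero _ _
    (one_sub_apply_eq_zero_or_of_no_common_child hB hjk hedge hchild)

/-- Let `B` be strictly upper triangular, `Ω = diagonal d` with `d j > 0`, and
`Θ = (I - B) Ω⁻¹ (I - B)ᵀ`. If `j < k`, `B j k = 0`, and for every `ℓ > k` at least one of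
`B j ℓ`, `B k ℓ` is zero (so `j, k` are non-adjacent and share no common child in the DAG of
the support of `B`), then `Θ j k = 0`. -/
theorem stmt_6 (p : ℕ) (B : Matrix (Fin p) (Fin p) ℝ) (d : Fin p → ℝ)
    (hd : ∀ j, 0 < d j) (hB : ∀ j k : Fin p, ¬ j < k → B j k = 0)
    (j k : Fin p) (hjk : j < k) (hedge : B j k = 0)
    (hchild : ∀ l : Fin p, k < l → B j l = 0 ∨ B k l = 0) :
    (((1 - B) * (Matrix.diagonal d)⁻¹ * (1 - B)ᵀ : Matrix (Fin p) (Fin p) ℝ)) j k = 0 :=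
  stmt_6_general p B d hB j k hjk hedge hchild
end

section
/- Consider the two-variable linear SEM X₁ = ε₁, X₂ = b₀X₁ + ε₂ with var(ε₁) = d₁², var(ε₂) = d₂². For the backward model parametrized by b (X₂ exogenous, X₁ = bX₂ + noise), the weighted score satisfies score_{Ω₀}(B) = 2 + b²b₀² + (b·d₂/d₁ − b₀·d₁/d₂)², which is minimized over b at b = b₀/(b₀² + d₂²/d₁²), and the resulting gap is ξ = min_b{score_{Ω₀}(B)} − 2 = b₀⁴ / (d₂⁴/d₁⁴ + b₀² d₂²/d₁²). -/
/-! Since `B₀` is nilpotent, `(I - B₀)⁻¹ = I + B₀`, so `Σ = [[d₁², b₀d₁²], [b₀d₁², b₀²d₁² + d₂²]]`.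
The diagonal weight turns the score into `∑ⱼ ((I - B)ᵀ Σ (I - B))ⱼⱼ / dⱼ`, a quadratic in `b`
for the backward model; completing the square as `(b₀² + d₂²/d₁²)(b - b*)² + 2 + ξ` yields the
minimiser `b*` and the gap `ξ` at once. -/

open Matrix

/-- The weighted squared-ℓ₂ score
`score d S B = tr (Ω^{-1/2} (I-B)ᵀ S (I-B) Ω^{-1/2})` with `Ω = diagonal d`. -/
noncomputable def score {p : ℕ} (d : Fin p → ℝ) (S B : Matrix (Fin p) (Fin p) ℝ) : ℝ :=
  (Matrix.diagonal (fun j => (Real.sqrt (d j))⁻¹) * (1 - B)ᵀ * S * (1 - B) *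
    Matrix.diagonal (fun j => (Real.sqrt (d j))⁻¹)).trace

namespace Matrix

theorem trace_diagonal_mul_mul_diagonal {n R : Type*} [Fintype n] [DecidableEq n]
    [CommSemiring R] (w : n → R) (M : Matrix n n R) :
    (diagonal w * M * diagonal w).trace = ∑ i, w i ^ 2 * M i i := by
  simp only [trace, diag_apply, mul_diagonal, diagonal_mul]
  exact Finset.sum_congr rfl fun i _ => by ring

theorem one_sub_fin_two {R : Type*} [Ring R] (a b c d : R) :
    1 - !![a, b; c, d] = !![1 - a, -b; -c, 1 - d] := by
  simp [one_fin_two]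

theorem transpose_fin_two {R : Type*} (a b c d : R) :
    !![a, b; c, d]ᵀ = !![a, c; b, d] := by
  ext i j
  fin_cases i <;> fin_cases j <;> rfl

theorem inv_one_sub_upper_fin_two {R : Type*} [CommRing R] (a : R) :
    (1 - !![0, a; 0, 0])⁻¹ = !![1, a; 0, 1] := by
  refine inv_eq_right_inv ?_
  rw [one_sub_fin_two, mul_fin_two, one_fin_two]
  simp

end Matrix

theorem score_eq_sum_div {p : ℕ} (d : Fin p → ℝ) (hd : ∀ j, 0 ≤ d j)
    (S B : Matrix (Fin p) (Fin p) ℝ) :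
    score d S B = ∑ j, ((1 - B)ᵀ * S * (1 - B) : Matrix (Fin p) (Fin p) ℝ) j j / d j := by
  rw [score, Matrix.mul_assoc _ (1 - B)ᵀ, Matrix.mul_assoc _ ((1 - B)ᵀ * S),
    trace_diagonal_mul_mul_diagonal]
  simp only [inv_pow, Real.sq_sqrt (hd _), inv_mul_eq_div]

theorem sem_covariance_fin_two {R : Type*} [CommRing R] (b₀ e₁ e₂ : R) :
    ((1 - !![0, b₀; 0, 0])ᵀ)⁻¹ * diagonal ![e₁, e₂] * (1 - !![0, b₀; 0, 0])⁻¹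
      = !![e₁, e₁ * b₀; e₁ * b₀, e₁ * b₀ ^ 2 + e₂] := by
  rw [← transpose_nonsing_inv, inv_one_sub_upper_fin_two, diagonal_fin_two, transpose_fin_two,
    mul_fin_two, mul_fin_two]
  simp [sq, mul_comm, mul_left_comm]

theorem score_backward_fin_two (b₀ b d₁ d₂ : ℝ) (hd₁ : d₁ ≠ 0) (hd₂ : d₂ ≠ 0) :
    score ![d₁ ^ 2, d₂ ^ 2]
        (((1 - !![0, b₀; 0, 0])ᵀ)⁻¹ * diagonal ![d₁ ^ 2, d₂ ^ 2] * (1 - !![0, b₀; 0, 0])⁻¹)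
        !![0, 0; b, 0]
      = 2 + b ^ 2 * b₀ ^ 2 + (b * d₂ / d₁ - b₀ * d₁ / d₂) ^ 2 := by
  rw [score_eq_sum_div _ (by simp [Fin.forall_fin_two, sq_nonneg]), sem_covariance_fin_two,
    Fin.sum_univ_two, one_sub_fin_two, transpose_fin_two, mul_fin_two, mul_fin_two]
  simp only [sub_zero, one_mul, neg_mul, mul_one, mul_neg, neg_zero, mul_zero, zero_add, zero_mul,
    of_apply, cons_val', cons_val_zero, cons_val_fin_one, cons_val_one]
  field_simp
  ring

theorem backward_score_eq_sq_add (b₀ b d₁ d₂ : ℝ) (hd₁ : d₁ ≠ 0) (hd₂ : d₂ ≠ 0) :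
    2 + b ^ 2 * b₀ ^ 2 + (b * d₂ / d₁ - b₀ * d₁ / d₂) ^ 2
      = (b₀ ^ 2 + d₂ ^ 2 / d₁ ^ 2) * (b - b₀ / (b₀ ^ 2 + d₂ ^ 2 / d₁ ^ 2)) ^ 2
        + 2 + b₀ ^ 4 / (d₂ ^ 4 / d₁ ^ 4 + b₀ ^ 2 * d₂ ^ 2 / d₁ ^ 2) := by
  have ha : b₀ ^ 2 + d₂ ^ 2 / d₁ ^ 2 ≠ 0 := by positivity
  have hξ : d₂ ^ 4 / d₁ ^ 4 + b₀ ^ 2 * d₂ ^ 2 / d₁ ^ 2 ≠ 0 := by positivity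
  field_simp
  ring

/-- Two-variable SEM `X₁ = ε₁`, `X₂ = b₀ X₁ + ε₂` with error variances `d₁², d₂²`.
For the backward model `B(b)` with single entry `b` in position `(2,1)`, the weighted score is
`2 + b² b₀² + (b d₂/d₁ - b₀ d₁/d₂)²`, minimized at `b* = b₀/(b₀² + d₂²/d₁²)`, and the gap is
`ξ = score(B(b*)) - 2 = b₀⁴ / (d₂⁴/d₁⁴ + b₀² d₂²/d₁²)`. -/
theorem stmt_11 (b₀ d₁ d₂ : ℝ) (hd₁ : 0 < d₁) (hd₂ : 0 < d₂) :
    let B₀ : Matrix (Fin 2) (Fin 2) ℝ := !![0, b₀; 0, 0]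
    let dv : Fin 2 → ℝ := ![d₁ ^ 2, d₂ ^ 2]
    let S : Matrix (Fin 2) (Fin 2) ℝ := ((1 - B₀)ᵀ)⁻¹ * Matrix.diagonal dv * (1 - B₀)⁻¹
    let Bb : ℝ → Matrix (Fin 2) (Fin 2) ℝ := fun b => !![0, 0; b, 0]
    let bstar : ℝ := b₀ / (b₀ ^ 2 + d₂ ^ 2 / d₁ ^ 2)
    (∀ b : ℝ,
      score dv S (Bb b) = 2 + b ^ 2 * b₀ ^ 2 + (b * d₂ / d₁ - b₀ * d₁ / d₂) ^ 2) ∧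
    (∀ b : ℝ, score dv S (Bb bstar) ≤ score dv S (Bb b)) ∧
    score dv S (Bb bstar) - 2 = b₀ ^ 4 / (d₂ ^ 4 / d₁ ^ 4 + b₀ ^ 2 * d₂ ^ 2 / d₁ ^ 2) := by
  intro B₀ dv S Bb bstar
  have hscore (b : ℝ) := score_backward_fin_two b₀ b d₁ d₂ hd₁.ne' hd₂.ne'
  have hsquare (b : ℝ) := backward_score_eq_sq_add b₀ b d₁ d₂ hd₁.ne' hd₂.ne'
  refine ⟨hscore, fun b => ?_, ?_⟩
  · rw [hscore, hscore, hsquare bstar, hsquare b, sub_self, zero_pow two_ne_zero, mul_zero, zero_add]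
    have : 0 ≤ (b₀ ^ 2 + d₂ ^ 2 / d₁ ^ 2) * (b - bstar) ^ 2 := by positivity
    linarith
  · rw [hscore, hsquare, sub_self]
    simp
end

section
/- In the two-variable SEM with true autoregression matrix B₀ (entry b₀ in position (1,2)) and Ω₀ = diag(d₁², d₂²), set r = d₂/d₁. If b₀² ≥ r²((r²−1)+√(r⁴−1)) when r ≥ 1, or b₀² ≥ (1−r²)+√(1−r⁴) when r ≤ 1, then B₀ is the unique minimizer of the unweighted score score_I(B) = tr((I−B)ᵀΣ(I−B)) over all matrices B that are permutation similar to strictly upper triangular 2×2 matrices. -/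
/-!
Here `Σ = !![d₁², d₁²b₀; d₁²b₀, d₁²b₀² + d₂²]`, and the competitors are `!![0, x; 0, 0]` and
`!![0, 0; y, 0]`. The score of the first exceeds that of `B₀` by `d₁²(x - b₀)²`. The score of the
second exceeds it by the quadratic `(d₁²b₀² + d₂²)y² - 2d₁²b₀y + d₁²b₀²`, whose discriminant is
negative exactly when `1 < b₀² + r²`; the lower bound on `b₀²` ensures this.
-/

open Matrix

/-- `B` is permutation similar to a strictly upper triangular matrix. -/
def PermStrictUpper {p : ℕ} (B : Matrix (Fin p) (Fin p) ℝ) : Prop :=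
  ∃ σ : Equiv.Perm (Fin p), ∀ i j : Fin p, ¬ i < j → B (σ i) (σ j) = 0

theorem PermStrictUpper.exists_fin_two {B : Matrix (Fin 2) (Fin 2) ℝ} (hB : PermStrictUpper B) :
    ∃ x y : ℝ, B = !![0, x; y, 0] ∧ x * y = 0 := by
  obtain ⟨σ, hσ⟩ := hB
  have hperm : ∀ τ : Equiv.Perm (Fin 2), τ = 1 ∨ τ = Equiv.swap 0 1 := by decide
  have h₀₀ := hσ 0 0 (lt_irrefl _)
  have h₁₀ := hσ 1 0 (by decide)
  have h₁₁ := hσ 1 1 (lt_irrefl _)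
  rcases hperm σ with rfl | rfl
  · refine ⟨B 0 1, 0, ?_, mul_zero _⟩
    simp only [Equiv.Perm.one_apply] at h₀₀ h₁₀ h₁₁
    ext i j; fin_cases i <;> fin_cases j <;> simp [h₀₀, h₁₀, h₁₁]
  · refine ⟨0, B 1 0, ?_, zero_mul _⟩
    simp only [Equiv.swap_apply_left, Equiv.swap_apply_right] at h₀₀ h₁₀ h₁₁
    ext i j; fin_cases i <;> fin_cases j <;> simp [h₀₀, h₁₀, h₁₁]

theorem inv_one_sub_of_upper (b : ℝ) :
    (1 - !![0, b; 0, 0] : Matrix (Fin 2) (Fin 2) ℝ)⁻¹ = !![1, b; 0, 1] := by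
  refine inv_eq_right_inv ?_
  rw [one_fin_two]
  simp

theorem covariance_fin_two (b ω₁ ω₂ : ℝ) :
    ((1 - !![0, b; 0, 0] : Matrix (Fin 2) (Fin 2) ℝ)ᵀ)⁻¹ * diagonal ![ω₁, ω₂] *
        (1 - !![0, b; 0, 0])⁻¹ = !![ω₁, ω₁ * b; ω₁ * b, ω₁ * b ^ 2 + ω₂] := by
  rw [← transpose_nonsing_inv, inv_one_sub_of_upper]
  ext i j
  fin_cases i <;> fin_cases j <;> simp [mul_apply, Fin.sum_univ_two] <;> ring

theorem trace_score_fin_two (a c e x y : ℝ) :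
    ((1 - !![0, x; y, 0])ᵀ * !![a, c; c, e] * (1 - !![0, x; y, 0])).trace
      = a * (1 + x ^ 2) + e * (1 + y ^ 2) - 2 * c * (x + y) := by
  rw [one_fin_two]
  simp [trace_fin_two, mul_apply, Fin.sum_univ_two]
  ring

theorem quadratic_pos_of_sq_lt {e c f : ℝ} (he : 0 < e) (h : c ^ 2 < e * f) (y : ℝ) :
    0 < e * y ^ 2 - 2 * c * y + f := by
  have h_mul : e * (e * y ^ 2 - 2 * c * y + f) = (e * y - c) ^ 2 + (e * f - c ^ 2) := by ring
  refine pos_of_mul_pos_right ?_ he.le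
  rw [h_mul]
  nlinarith [sq_nonneg (e * y - c)]

theorem one_lt_sq_add_sq {r b : ℝ} (hr : 0 < r) (hb : b ≠ 0)
    (h : r ≤ 1 → 1 - r ^ 2 + √(1 - r ^ 4) ≤ b ^ 2) : 1 < b ^ 2 + r ^ 2 := by
  have hb2 : 0 < b ^ 2 := by positivity
  rcases lt_or_ge r 1 with hr1 | hr1
  · have : 0 < √(1 - r ^ 4) := Real.sqrt_pos.2 (by nlinarith [pow_lt_one₀ hr.le hr1 four_ne_zero])
    linarith [h hr1.le]
  · nlinarith

theorem reverse_score_gap_pos {d₁ d₂ b y : ℝ} (hd₁ : d₁ ≠ 0) (hd₂ : d₂ ≠ 0)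
    (hcond : b ≠ 0 → d₁ ^ 2 < d₁ ^ 2 * b ^ 2 + d₂ ^ 2) (hyb : y ≠ 0 ∨ b ≠ 0) :
    0 < (d₁ ^ 2 * b ^ 2 + d₂ ^ 2) * y ^ 2 - 2 * (d₁ ^ 2 * b) * y + d₁ ^ 2 * b ^ 2 := by
  by_cases hb : b = 0
  · subst hb
    have hy : y ≠ 0 := by simpa using hyb
    simpa using (by positivity : 0 < d₂ ^ 2 * y ^ 2)
  · refine quadratic_pos_of_sq_lt (by positivity) ?_ y
    have : 0 < d₁ ^ 2 * b ^ 2 := by positivity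
    nlinarith [hcond hb]

theorem stmt_12_general (b₀ d₁ d₂ : ℝ) (hd₁ : 0 < d₁) (hd₂ : 0 < d₂)
    (hcond₂ : d₂ / d₁ ≤ 1 →
      (1 - (d₂ / d₁) ^ 2) + Real.sqrt (1 - (d₂ / d₁) ^ 4) ≤ b₀ ^ 2) :
    let B₀ : Matrix (Fin 2) (Fin 2) ℝ := !![0, b₀; 0, 0]
    let S : Matrix (Fin 2) (Fin 2) ℝ :=
      ((1 - B₀)ᵀ)⁻¹ * Matrix.diagonal ![d₁ ^ 2, d₂ ^ 2] * (1 - B₀)⁻¹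
    ∀ B : Matrix (Fin 2) (Fin 2) ℝ, PermStrictUpper B → B ≠ B₀ →
      ((1 - B₀)ᵀ * S * (1 - B₀)).trace < ((1 - B)ᵀ * S * (1 - B)).trace := by
  intro B₀ S B hB hne
  obtain ⟨x, y, rfl, hxy⟩ := hB.exists_fin_two
  have hS : S = !![d₁ ^ 2, d₁ ^ 2 * b₀; d₁ ^ 2 * b₀, d₁ ^ 2 * b₀ ^ 2 + d₂ ^ 2] :=
    covariance_fin_two b₀ _ _
  rw [hS, trace_score_fin_two, trace_score_fin_two]
  rcases mul_eq_zero.1 hxy with rfl | rfl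
  · have hyb : y ≠ 0 ∨ b₀ ≠ 0 := by
      by_contra! h
      obtain ⟨rfl, rfl⟩ := h
      exact hne rfl
    have hcond : b₀ ≠ 0 → d₁ ^ 2 < d₁ ^ 2 * b₀ ^ 2 + d₂ ^ 2 := fun hb => by
      have h := one_lt_sq_add_sq (div_pos hd₂ hd₁) hb hcond₂
      field_simp at h
      linarith
    linarith [reverse_score_gap_pos hd₁.ne' hd₂.ne' hcond hyb]
  · have hx : x - b₀ ≠ 0 := sub_ne_zero.2 fun h => hne (by rw [h])
    nlinarith [show 0 < d₁ ^ 2 * (x - b₀) ^ 2 by positivity]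

/-- Two-variable SEM with true autoregression matrix `B₀` (entry `b₀` in position `(1,2)`),
`Ω₀ = diag(d₁², d₂²)`, `r = d₂/d₁`. If `b₀² ≥ r²((r²-1) + √(r⁴-1))` when `r ≥ 1`, or
`b₀² ≥ (1-r²) + √(1-r⁴)` when `r ≤ 1`, then `B₀` is the unique minimizer of the unweighted
score `tr ((I-B)ᵀ Σ (I-B))` over matrices permutation similar to strictly upper triangular
`2 × 2` matrices. -/
theorem stmt_12 (b₀ d₁ d₂ : ℝ) (hd₁ : 0 < d₁) (hd₂ : 0 < d₂)
    (hcond₁ : 1 ≤ d₂ / d₁ →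
      (d₂ / d₁) ^ 2 * (((d₂ / d₁) ^ 2 - 1) + Real.sqrt ((d₂ / d₁) ^ 4 - 1)) ≤ b₀ ^ 2)
    (hcond₂ : d₂ / d₁ ≤ 1 →
      (1 - (d₂ / d₁) ^ 2) + Real.sqrt (1 - (d₂ / d₁) ^ 4) ≤ b₀ ^ 2) :
    let B₀ : Matrix (Fin 2) (Fin 2) ℝ := !![0, b₀; 0, 0]
    let S : Matrix (Fin 2) (Fin 2) ℝ :=
      ((1 - B₀)ᵀ)⁻¹ * Matrix.diagonal ![d₁ ^ 2, d₂ ^ 2] * (1 - B₀)⁻¹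
    ∀ B : Matrix (Fin 2) (Fin 2) ℝ, PermStrictUpper B → B ≠ B₀ →
      ((1 - B₀)ᵀ * S * (1 - B₀)).trace < ((1 - B)ᵀ * S * (1 - B)).trace :=
  stmt_12_general b₀ d₁ d₂ hd₁ hd₂ hcond₂
end

section
/- Suppose X follows a linear SEM with autoregression matrix B₀ whose DAG is G₀. For any DAG G with G₀ ⊆ G (edge containment) and any diagonal positive definite weight matrix Ω, the minimum of score_Ω(B) over matrices B supported on the edges of G equals score_Ω(B₀), and B₀ is the unique minimizer over that set. -/
/-!
Write `P = I - B₀`, so that `Σ = P⁻ᵀ D₀ P⁻¹` and the score of `B` is the weighted sum of squares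
`∑ᵢⱼ d₀ᵢ / dⱼ · ((P⁻¹ (I - B))ᵢⱼ)²`. Both `B₀` and `B` are supported on the edges of the DAG `G`,
hence strictly triangular for its topological order, and so `P⁻¹ (I - B) = I + N` with
`N = P⁻¹ (B₀ - B)` strictly triangular as well. The diagonal of `I + N` is therefore that of `I`,
and the score of `B` exceeds that of `B₀` (the case `N = 0`) by the weighted sum of squares of
the entries of `N`, which is positive unless `N = 0`, i.e. unless `B = B₀`.
-/

open Matrix

namespace Matrix

variable {m α R : Type*} [Fintype m] [LinearOrder α]

theorem det_of_blockTriangular_equiv [DecidableEq m] [CommRing R] [Fintype α] [DecidableEq α]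
    {M : Matrix m m R} (e : m ≃ α) (hM : M.BlockTriangular e) : M.det = ∏ i, M i i := by
  have hupper : (reindex e e M).IsUpperTriangular := fun i j hji => by
    simpa using hM (by simpa using hji)
  rw [← det_reindex_self e M, det_of_isUpperTriangular hupper]
  exact e.symm.prod_comp fun i => M i i

theorem mul_apply_self_eq_zero_of_blockTriangular [NonUnitalNonAssocSemiring R]
    {M C : Matrix m m R} {b : m → α} (hM : M.BlockTriangular b)
    (hC : ∀ i j, b j ≤ b i → C i j = 0) (i : m) : (M * C) i i = 0 := by
  rw [mul_apply]
  refine Finset.sum_eq_zero fun k _ => ?_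
  rcases lt_or_ge (b k) (b i) with hki | hik
  · rw [hM hki, zero_mul]
  · rw [hC k i hik, mul_zero]

end Matrix

section WeightedSqNorm

variable {ι : Type*} [Fintype ι]

def weightedSqNorm (w : ι → ι → ℝ) (A : Matrix ι ι ℝ) : ℝ :=
  ∑ j, ∑ i, w i j * A i j ^ 2

theorem weightedSqNorm_nonneg {w : ι → ι → ℝ} (hw : ∀ i j, 0 ≤ w i j) (A : Matrix ι ι ℝ) :
    0 ≤ weightedSqNorm w A :=
  Finset.sum_nonneg fun j _ => Finset.sum_nonneg fun i _ => mul_nonneg (hw i j) (sq_nonneg _)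

theorem weightedSqNorm_pos {w : ι → ι → ℝ} (hw : ∀ i j, 0 < w i j) {A : Matrix ι ι ℝ}
    (hA : A ≠ 0) : 0 < weightedSqNorm w A := by
  obtain ⟨i, j, hij⟩ : ∃ i j, A i j ≠ 0 := by
    by_contra! h
    exact hA (Matrix.ext h)
  have hnonneg : ∀ i j, 0 ≤ w i j * A i j ^ 2 := fun i j => mul_nonneg (hw i j).le (sq_nonneg _)
  refine Finset.sum_pos' (fun j _ => Finset.sum_nonneg fun i _ => hnonneg i j)
    ⟨j, Finset.mem_univ _, Finset.sum_pos' (fun i _ => hnonneg i j) ⟨i, Finset.mem_univ _, ?_⟩⟩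
  exact mul_pos (hw i j) (by positivity)

theorem weightedSqNorm_one_add [DecidableEq ι] (w : ι → ι → ℝ) {N : Matrix ι ι ℝ}
    (hN : ∀ i, N i i = 0) :
    weightedSqNorm w (1 + N) = weightedSqNorm w 1 + weightedSqNorm w N := by
  simp only [weightedSqNorm, ← Finset.sum_add_distrib, ← mul_add]
  refine Finset.sum_congr rfl fun j _ => Finset.sum_congr rfl fun i _ => ?_
  rcases eq_or_ne i j with rfl | hij
  · simp [hN]
  · simp [one_apply_ne hij]

end WeightedSqNorm

theorem score_eq_weightedSqNorm {p : ℕ} {d : Fin p → ℝ} (hd : ∀ j, 0 ≤ d j) (d₀ : Fin p → ℝ)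
    (P B : Matrix (Fin p) (Fin p) ℝ) :
    score d ((Pᵀ)⁻¹ * diagonal d₀ * P⁻¹) B
      = weightedSqNorm (fun i j => d₀ i / d j) (P⁻¹ * (1 - B)) := by
  set v : Fin p → ℝ := fun j => (Real.sqrt (d j))⁻¹
  set A := P⁻¹ * (1 - B)
  have hregroup : diagonal v * (1 - B)ᵀ * ((Pᵀ)⁻¹ * diagonal d₀ * P⁻¹) * (1 - B) * diagonal v
      = diagonal v * (Aᵀ * (diagonal d₀ * A)) * diagonal v := by
    rw [show Aᵀ = (1 - B)ᵀ * (Pᵀ)⁻¹ by rw [transpose_mul, transpose_nonsing_inv]]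
    simp only [A, Matrix.mul_assoc]
  rw [score, hregroup, trace]
  refine Finset.sum_congr rfl fun j _ => ?_
  rw [diag_apply, mul_diagonal, diagonal_mul, mul_apply, Finset.mul_sum, Finset.sum_mul]
  refine Finset.sum_congr rfl fun i _ => ?_
  have hvv : v j * v j = (d j)⁻¹ := by rw [← mul_inv, Real.mul_self_sqrt (hd j)]
  simp only [transpose_apply, diagonal_mul]
  linear_combination d₀ i * A i j ^ 2 * hvv

/-- Suppose `X` follows a linear SEM with autoregression matrix `B₀` (error variances `d₀`,
covariance `Σ = (I-B₀)⁻ᵀ diagonal d₀ (I-B₀)⁻¹`) whose DAG `G₀` is contained in the DAG `G`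
with edge relation `E` (acyclic, witnessed by a topological order `σ`). Then for any diagonal
positive definite weight matrix `Ω = diagonal d`, the matrix `B₀` is the unique minimizer of
`score_Ω` over the matrices supported on the edges of `G`. -/
theorem stmt_15 (p : ℕ) (E : Fin p → Fin p → Prop)
    (σ : Equiv.Perm (Fin p)) (htopo : ∀ j k : Fin p, E j k → σ j < σ k)
    (B₀ : Matrix (Fin p) (Fin p) ℝ) (hB₀ : ∀ j k : Fin p, B₀ j k ≠ 0 → E j k)
    (d₀ d : Fin p → ℝ) (hd₀ : ∀ j, 0 < d₀ j) (hd : ∀ j, 0 < d j)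
    (S : Matrix (Fin p) (Fin p) ℝ)
    (hS : S = ((1 - B₀)ᵀ)⁻¹ * Matrix.diagonal d₀ * (1 - B₀)⁻¹) :
    ∀ B : Matrix (Fin p) (Fin p) ℝ, (∀ j k : Fin p, ¬ E j k → B j k = 0) →
      score d S B₀ ≤ score d S B ∧ (B ≠ B₀ → score d S B₀ < score d S B) := by
  intro B hB
  have hnotE : ∀ j k, σ k ≤ σ j → ¬ E j k := fun j k hkj h => (htopo j k h).not_ge hkj
  have hB₀strict : ∀ j k, σ k ≤ σ j → B₀ j k = 0 := fun j k hkj => by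
    by_contra h
    exact hnotE j k hkj (hB₀ j k h)
  set P := 1 - B₀
  have hPtri : P.BlockTriangular σ :=
    blockTriangular_one.sub fun j k hkj => hB₀strict j k hkj.le
  have hPdet : P.det = 1 := by
    rw [det_of_blockTriangular_equiv σ hPtri]
    exact Finset.prod_eq_one fun j _ => by simp [P, hB₀strict j j le_rfl]
  have : Invertible P := P.invertibleOfIsUnitDet (by simp [hPdet])
  set N := P⁻¹ * (B₀ - B)
  have hNdiag : ∀ i, N i i = 0 :=
    mul_apply_self_eq_zero_of_blockTriangular (blockTriangular_inv_of_blockTriangular hPtri)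
      fun j k hkj => by simp [hB₀strict j k hkj, hB j k (hnotE j k hkj)]
  have hA : P⁻¹ * (1 - B) = 1 + N := by
    rw [← sub_add_sub_cancel 1 B₀ B, mul_add, inv_mul_of_invertible]
  have hscore : score d S B = score d S B₀ + weightedSqNorm (fun i j => d₀ i / d j) N := by
    have hd' : ∀ j, 0 ≤ d j := fun j => (hd j).le
    rw [hS, score_eq_weightedSqNorm hd', score_eq_weightedSqNorm hd', hA,
      inv_mul_of_invertible, weightedSqNorm_one_add _ hNdiag]
  have hw : ∀ i j, 0 < d₀ i / d j := fun i j => div_pos (hd₀ i) (hd j)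
  refine ⟨by linarith [weightedSqNorm_nonneg (fun i j => (hw i j).le) N], fun hne => ?_⟩
  have hN : N ≠ 0 := fun h => hne (sub_eq_zero.mp (by
    rw [← mul_inv_cancel_left_of_invertible P (B₀ - B)]; simp [N, h])).symm
  linarith [weightedSqNorm_pos hw hN]
end
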